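/- Let L ⊆ Γ^∞ be strongly recognized by a surjective homomorphism h : Γ* → M onto a finite monoid, and define W = ⋃{[s] : [s][e]^ω ⊆ L for some linked pair (s,e)}. Then the following are equivalent: (1) L = →W; (2) for all linked pairs (s,e), (t,f) with s R t (i.e., sM = tM), [s][e]^ω ⊆ L iff [t][f]^ω ⊆ L; (3) for every linked pair (s,e), [s][e]^ω ⊆ L iff [s] ⊆ L; (4) both L and Γ^∞ \ L are arrow languages. -/

import Mathlib

namespace InfWords

variable {Γ : Type}

/-- Finite and infinite words over `Γ`: `Γ^∞ = Γ* ∪ Γ^ω`. -/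
abbrev Word (Γ : Type) := List Γ ⊕ (ℕ → Γ)

/-- Prepend a finite word to a finite or infinite word. -/
def wappend (u : List Γ) : Word Γ → Word Γ
  | Sum.inl v => Sum.inl (u ++ v)
  | Sum.inr f => Sum.inr fun n => if h : n < u.length then u.get ⟨n, h⟩ else f (n - u.length)

/-- The set of finite words `Γ*` inside `Γ^∞`. -/
def finWords (Γ : Type) : Set (Word Γ) := Set.range Sum.inl

/-- The set of infinite words `Γ^ω` inside `Γ^∞`. -/
def infWords (Γ : Type) : Set (Word Γ) := Set.range Sum.inr

/-- The alphabet of a word: the letters occurring in it. -/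
def alph : Word Γ → Set Γ
  | Sum.inl u => {a | a ∈ u}
  | Sum.inr f => {a | ∃ n, f n = a}

/-- The imaginary part: letters occurring infinitely often. -/
def im : Word Γ → Set Γ
  | Sum.inl _ => ∅
  | Sum.inr f => {a | ∀ n, ∃ m, n ≤ m ∧ f m = a}

/-- `A^∞`: words all of whose letters lie in `A`. -/
def infin (A : Set Γ) : Set (Word Γ) := {α | alph α ⊆ A}

/-- The basic set `u A^∞` of the alphabetic topology. -/
def cone (u : List Γ) (A : Set Γ) : Set (Word Γ) := wappend u '' infin A

/-- The alphabetic topology on `Γ^∞`, generated by the sets `u A^∞`. -/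
instance alphTop : TopologicalSpace (Word Γ) :=
  TopologicalSpace.generateFrom {S | ∃ u A, S = cone u A}

/-- `cpx A`: words with `alph = im = A`. -/
def cpx (A : Set Γ) : Set (Word Γ) := {β | alph β = A ∧ im β = A}

/-- The strict alphabetic topology, generated by the sets `u · cpx A`. -/
def strictTopo (Γ : Type) : TopologicalSpace (Word Γ) :=
  TopologicalSpace.generateFrom {S | ∃ u A, S = wappend u '' cpx A}

/-- `u` is a finite prefix of the word `α`. -/
def IsPre (u : List Γ) : Word Γ → Prop
  | Sum.inl v => u <+: v
  | Sum.inr f => ∀ i : Fin u.length, u.get i = f i.1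

/-- The arrow language `→W`: every prefix extends to a prefix lying in `W`. -/
def arrow (W : Set (List Γ)) : Set (Word Γ) :=
  {α | ∀ u, IsPre u α → ∃ v, IsPre (u ++ v) α ∧ u ++ v ∈ W}

/-- The right quotient `L / A^∞`. -/
def quotInf (L : Set (Word Γ)) (A : Set Γ) : Set (List Γ) :=
  {u | ∃ β ∈ infin A, wappend u β ∈ L}

/-- `A^im`: words whose set of letters occurring infinitely often is exactly `A`. -/
def imSet (A : Set Γ) : Set (Word Γ) := {α | im α = A}

/-- `z^ω`, with the convention `1^ω = 1`. -/
def omegaPow : List Γ → Word Γ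
  | [] => Sum.inl []
  | a :: l => Sum.inr fun n => (a :: l).get ⟨n % (a :: l).length, Nat.mod_lt n (Nat.succ_pos _)⟩

/-- The partial products `u v₀ v₁ ⋯ v_{n-1}`. -/
def partialProd (u : List Γ) (v : ℕ → List Γ) (n : ℕ) : List Γ :=
  u ++ ((List.range n).map v).flatten

/-- `α` is the (finite or infinite) product `u v₀ v₁ v₂ ⋯`, with convention `1^ω = 1`. -/
def IsInfProd (u : List Γ) (v : ℕ → List Γ) : Word Γ → Prop
  | Sum.inl w => (∀ n, partialProd u v n <+: w) ∧ ∃ n, partialProd u v n = w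
  | Sum.inr f => (∀ n, IsPre (partialProd u v n) (Sum.inr f)) ∧
      ∀ k, ∃ n, k < (partialProd u v n).length

/-- `h : Γ* → M` is a monoid homomorphism. -/
structure IsHom {M : Type} [Monoid M] (h : List Γ → M) : Prop where
  map_one : h [] = 1
  map_mul : ∀ u v, h (u ++ v) = h u * h v

/-- `[s][e]^ω`: products `u v₀ v₁ ⋯` with `h u = s` and `h vᵢ = e`. -/
def pairSet {M : Type} (h : List Γ → M) (s e : M) : Set (Word Γ) :=
  {α | ∃ u v, h u = s ∧ (∀ i, h (v i) = e) ∧ IsInfProd u v α}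

/-- `(s, e)` is a linked pair. -/
def LinkedPair {M : Type} [Monoid M] (s e : M) : Prop := s * e = s ∧ e * e = e

/-- `h` strongly recognizes `L`. -/
def StronglyRecognizes {M : Type} [Monoid M] (h : List Γ → M) (L : Set (Word Γ)) : Prop :=
  L = ⋃ (s : M) (e : M) (_ : LinkedPair s e ∧ (pairSet h s e ∩ L).Nonempty), pairSet h s e

/-- `L` is regular: strongly recognized by a surjective homomorphism onto a finite monoid. -/
def Regular (L : Set (Word Γ)) : Prop :=
  ∃ (M : Type) (i : Monoid M), Finite M ∧
    ∃ h : List Γ → M, @IsHom Γ M i h ∧ Function.Surjective h ∧ @StronglyRecognizes Γ M i h L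

/-- `L` is deterministic. -/
def Deterministic (L : Set (Word Γ)) : Prop :=
  Regular L ∧ ∃ W : Set (List Γ), L ∩ infWords Γ = arrow W ∩ infWords Γ

/-- The syntactic preorder `u ≤_L v`. -/
def synLe (L : Set (Word Γ)) (u v : List Γ) : Prop :=
  ∀ x y z : List Γ,
    (wappend (x ++ v ++ y) (omegaPow z) ∈ L → wappend (x ++ u ++ y) (omegaPow z) ∈ L) ∧
    (wappend x (omegaPow (v ++ y)) ∈ L → wappend x (omegaPow (u ++ y)) ∈ L)

/-- The syntactic congruence `u ≡_L v`. -/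
def synEq (L : Set (Word Γ)) (u v : List Γ) : Prop := synLe L u v ∧ synLe L v u

/-- `[s][e]^ω` for syntactic classes represented by words `s`, `e`. -/
def pairSetSyn (L : Set (Word Γ)) (s e : List Γ) : Set (Word Γ) :=
  {α | ∃ u v, synEq L u s ∧ (∀ i, synEq L (v i) e) ∧ IsInfProd u v α}

/-- `s` represents an element of `M_e` in the syntactic monoid of `L`:
`s` is a product of words each of which is a factor of (something equivalent to) `e`. -/
def InMe (L : Set (Word Γ)) (e s : List Γ) : Prop :=
  ∃ parts : List (List Γ), s = parts.flatten ∧ ∀ p ∈ parts, ∃ x y, synEq L (x ++ p ++ y) e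

/-- Glue a factorization `u₁ a₁ u₂ a₂ ⋯ u_k a_k` into a single finite word. -/
def glue : List (List Γ) → List (Set Γ × Γ) → List Γ
  | x :: xs, p :: l => x ++ p.2 :: glue xs l
  | _, _ => []

/-- `(us, β)` is a factorization of `α` as `u₁ a₁ ⋯ u_k a_k β` with `uᵢ ∈ Aᵢ*`, `β ∈ B^∞`. -/
def IsFactorization (l : List (Set Γ × Γ)) (B : Set Γ) (us : List (List Γ)) (β : Word Γ)
    (α : Word Γ) : Prop :=
  us.length = l.length ∧
  (∀ (i : ℕ) (h1 : i < us.length) (h2 : i < l.length),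
    ∀ c ∈ us.get ⟨i, h1⟩, c ∈ (l.get ⟨i, h2⟩).1) ∧
  β ∈ infin B ∧ α = wappend (glue us l) β

/-- The monomial `A₁* a₁ ⋯ A_k* a_k B^∞`. -/
def monomial (l : List (Set Γ × Γ)) (B : Set Γ) : Set (Word Γ) :=
  {α | ∃ us β, IsFactorization l B us β α}

/-- The monomial given by `(l, B)` is unambiguous. -/
def Unambiguous (l : List (Set Γ × Γ)) (B : Set Γ) : Prop :=
  ∀ α us β us' β', IsFactorization l B us β α → IsFactorization l B us' β' α →
    us = us' ∧ β = β'

/-- `L` is a polynomial: a finite union of monomials. -/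
def IsPolynomial (L : Set (Word Γ)) : Prop :=
  ∃ ms : List (List (Set Γ × Γ) × Set Γ), L = {α | ∃ m ∈ ms, α ∈ monomial m.1 m.2}

/-- The set of marker letters of a monomial. -/
def sndSet (l : List (Set Γ × Γ)) : Set Γ := {a | ∃ p ∈ l, p.2 = a}

/-- `M_e`: the submonoid generated by the factors of the idempotent `e`. -/
def Msub {M : Type} [Monoid M] (e : M) : Submonoid M :=
  Submonoid.closure {t | ∃ x y, x * t * y = e}

/-- The variety `DA`: `ese = e` for all idempotents `e` and all `s ∈ M_e`. -/
def IsDA (M : Type) [Monoid M] : Prop :=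
  ∀ e : M, e * e = e → ∀ s ∈ Msub e, e * s * e = e


/-! ### Auxiliary lemmas for the arrow characterization theorem -/

section ArrowAux

variable {Γ : Type} {M : Type} [Monoid M]

theorem pp_zero (u : List Γ) (v : ℕ → List Γ) : partialProd u v 0 = u := by
  simp [partialProd]

theorem pp_succ (u : List Γ) (v : ℕ → List Γ) (n : ℕ) :
    partialProd u v (n + 1) = partialProd u v n ++ v n := by
  simp [partialProd, List.range_succ]

theorem pp_mono (u : List Γ) (v : ℕ → List Γ) {m n : ℕ} (hmn : m ≤ n) :
    partialProd u v m <+: partialProd u v n := by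
  induction n with
  | zero =>
    have : m = 0 := Nat.le_zero.mp hmn
    subst this; exact List.prefix_refl _
  | succ n ih =>
    rcases Nat.lt_or_ge m (n + 1) with hm | hm
    · exact (ih (Nat.lt_succ_iff.mp hm)).trans (by rw [pp_succ]; exact List.prefix_append _ _)
    · have : m = n + 1 := le_antisymm hmn hm
      subst this; exact List.prefix_refl _

theorem h_pp {h : List Γ → M} (hh : IsHom h) {v : ℕ → List Γ} {e : M}
    (hv : ∀ i, h (v i) = e) (u : List Γ) (n : ℕ) :
    h (partialProd u v n) = h u * e ^ n := by
  induction n with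
  | zero => rw [pp_zero, pow_zero, mul_one]
  | succ n ih => rw [pp_succ, hh.map_mul, ih, hv, pow_succ, mul_assoc]

theorem linked_pow {s e : M} (hse : s * e = s) (n : ℕ) : s * e ^ n = s := by
  induction n with
  | zero => rw [pow_zero, mul_one]
  | succ n ih => rw [pow_succ, ← mul_assoc, ih, hse]

theorem h_pp_linked {h : List Γ → M} (hh : IsHom h) {v : ℕ → List Γ} {e s : M}
    (hv : ∀ i, h (v i) = e) {u : List Γ} (hu : h u = s) (hse : s * e = s) (n : ℕ) :
    h (partialProd u v n) = s := by
  rw [h_pp hh hv, hu, linked_pow hse]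

theorem isPre_inl {p w : List Γ} : IsPre p (Sum.inl w : Word Γ) ↔ p <+: w := Iff.rfl

theorem isPre_mono {p q : List Γ} {α : Word Γ} (hpq : p <+: q) (hq : IsPre q α) : IsPre p α := by
  cases α with
  | inl w => exact hpq.trans hq
  | inr f =>
    intro i
    have hi : i.1 < q.length := lt_of_lt_of_le i.2 hpq.length_le
    have h1 := hq ⟨i.1, hi⟩
    have h2 : p.get i = q.get ⟨i.1, hi⟩ := by
      simp only [List.get_eq_getElem]
      exact hpq.getElem i.2
    rw [h2]; exact h1

theorem isPre_prefix_of_le {p q : List Γ} {f : ℕ → Γ} (hp : IsPre p (Sum.inr f : Word Γ))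
    (hq : IsPre q (Sum.inr f : Word Γ)) (hle : p.length ≤ q.length) : p <+: q := by
  rw [List.prefix_iff_eq_take]
  apply List.ext_getElem (by simp [Nat.min_eq_left hle])
  intro n h1 h2
  have e1 := hp ⟨n, h1⟩
  have hn : n < q.length := lt_of_lt_of_le h1 hle
  have e2 := hq ⟨n, hn⟩
  simp only [List.get_eq_getElem] at e1 e2
  simp [List.getElem_take, e1, e2]

theorem inl_mem_arrow {w : List Γ} {W : Set (List Γ)} :
    (Sum.inl w : Word Γ) ∈ arrow W ↔ w ∈ W := by
  constructor
  · intro hw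
    obtain ⟨v, hv1, hv2⟩ := hw w (List.prefix_refl w)
    have hlen := (isPre_inl.mp hv1).length_le
    simp only [List.length_append] at hlen
    have : v = [] := List.length_eq_zero_iff.mp (by omega)
    simpa [this] using hv2
  · intro hw p hp
    obtain ⟨v, hv⟩ := isPre_inl.mp hp
    exact ⟨v, by rw [hv]; exact List.prefix_refl w, by rw [hv]; exact hw⟩

theorem inr_mem_arrow_of_cofinal {f : ℕ → Γ} {W : Set (List Γ)}
    (hc : ∀ k, ∃ q, IsPre q (Sum.inr f : Word Γ) ∧ k ≤ q.length ∧ q ∈ W) :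
    (Sum.inr f : Word Γ) ∈ arrow W := by
  intro p hp
  obtain ⟨q, hq1, hq2, hq3⟩ := hc p.length
  obtain ⟨v, rfl⟩ := isPre_prefix_of_le hp hq1 hq2
  exact ⟨v, hq1, hq3⟩

theorem pp_const_nil (u : List Γ) (n : ℕ) : partialProd u (fun _ => ([] : List Γ)) n = u := by
  induction n with
  | zero => exact pp_zero _ _
  | succ n ih => rw [pp_succ, ih, List.append_nil]

theorem inl_mem_pairSet {h : List Γ → M} (hh : IsHom h) {w : List Γ} {s e : M} :
    (Sum.inl w : Word Γ) ∈ pairSet h s e ↔ s = h w ∧ e = 1 := by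
  constructor
  · rintro ⟨u, v, hu, hv, hpre, n, hn⟩
    have hvn : v n = [] := by
      have h1 := hpre (n + 1)
      rw [pp_succ, hn] at h1
      have := h1.length_le
      simp only [List.length_append] at this
      exact List.length_eq_zero_iff.mp (by omega)
    have he : e = 1 := by rw [← hv n, hvn, hh.map_one]
    refine ⟨?_, he⟩
    rw [← hn, h_pp hh hv, hu, he, one_pow, mul_one]
  · rintro ⟨rfl, rfl⟩
    refine ⟨w, fun _ => [], rfl, fun i => hh.map_one, fun n => ?_, 0, pp_zero _ _⟩
    rw [pp_const_nil]

end ArrowAux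


section ArrowAux2

variable {Γ : Type} {M : Type} [Monoid M]

theorem pp_length_le {v : ℕ → List Γ} (hv : ∀ i, v i ≠ []) (u : List Γ) :
    ∀ n, n ≤ (partialProd u v n).length := by
  intro n
  induction n with
  | zero => exact Nat.zero_le _
  | succ n ih =>
    rw [pp_succ, List.length_append]
    have := List.length_pos_iff.mpr (hv n)
    omega

theorem pp_length_lt {v : ℕ → List Γ} (hv : ∀ i, v i ≠ []) (u : List Γ) (n : ℕ) :
    n < (partialProd u v (n + 1)).length :=
  lt_of_lt_of_le (Nat.lt_succ_self n) (pp_length_le hv u (n + 1))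

/-- The infinite word `u v₀ v₁ v₂ ⋯` when all the `vᵢ` are nonempty. -/
noncomputable def wseq (u : List Γ) (v : ℕ → List Γ) (hv : ∀ i, v i ≠ []) : ℕ → Γ :=
  fun n => (partialProd u v (n + 1)).get ⟨n, pp_length_lt hv u n⟩

theorem getElem_eq_of_prefix {l₁ l₂ : List Γ} (hp : l₁ <+: l₂) {i : ℕ}
    (h1 : i < l₁.length) (h2 : i < l₂.length) : l₁[i] = l₂[i] :=
  hp.getElem h1

theorem isPre_pp_wseq {v : ℕ → List Γ} (hv : ∀ i, v i ≠ []) (u : List Γ) (n : ℕ) :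
    IsPre (partialProd u v n) (Sum.inr (wseq u v hv) : Word Γ) := by
  intro i
  show (partialProd u v n).get i = (partialProd u v (i.1 + 1)).get ⟨i.1, pp_length_lt hv u i.1⟩
  simp only [List.get_eq_getElem]
  rcases le_total n (i.1 + 1) with hc | hc
  · exact getElem_eq_of_prefix (pp_mono u v hc) i.2 (pp_length_lt hv u i.1)
  · exact (getElem_eq_of_prefix (pp_mono u v hc) (pp_length_lt hv u i.1) i.2).symm

theorem isInfProd_wseq {v : ℕ → List Γ} (hv : ∀ i, v i ≠ []) (u : List Γ) :
    IsInfProd u v (Sum.inr (wseq u v hv) : Word Γ) :=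
  ⟨fun n => isPre_pp_wseq hv u n, fun k => ⟨k + 1, pp_length_lt hv u k⟩⟩

theorem pp_const (u w : List Γ) (n : ℕ) :
    partialProd u (fun _ => w) n = u ++ (List.replicate n w).flatten := by
  induction n with
  | zero => simp [pp_zero]
  | succ n ih =>
    rw [pp_succ, ih, List.replicate_succ', List.flatten_append, List.append_assoc]
    simp

theorem h_flatten_replicate {h : List Γ → M} (hh : IsHom h) (w : List Γ) (k : ℕ) :
    h (List.replicate k w).flatten = (h w) ^ k := by
  induction k with
  | zero => simpa using hh.map_one
  | succ k ih => rw [List.replicate_succ, List.flatten_cons, hh.map_mul, ih, pow_succ']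

theorem flatten_replicate_mul (w : List Γ) (n k : ℕ) :
    (List.replicate n (List.replicate k w).flatten).flatten
      = (List.replicate (n * k) w).flatten := by
  induction n with
  | zero => simp
  | succ n ih =>
    rw [List.replicate_succ, List.flatten_cons, ih, Nat.succ_mul, Nat.add_comm,
      List.replicate_add, List.flatten_append]

theorem length_flatten_replicate (w : List Γ) (n : ℕ) :
    ((List.replicate n w).flatten).length = n * w.length := by
  induction n with
  | zero => simp
  | succ n ih => rw [List.replicate_succ, List.flatten_cons, List.length_append, ih,
      Nat.succ_mul, Nat.add_comm]

theorem append_flatten_replicate (x y : List Γ) (m : ℕ) :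
    x ++ (List.replicate m (y ++ x)).flatten = (List.replicate m (x ++ y)).flatten ++ x := by
  induction m with
  | zero => simp
  | succ m ih =>
    rw [List.replicate_succ, List.replicate_succ, List.flatten_cons, List.flatten_cons]
    rw [show x ++ (y ++ x ++ (List.replicate m (y ++ x)).flatten)
        = (x ++ y) ++ (x ++ (List.replicate m (y ++ x)).flatten) by simp, ih]
    simp

theorem pow_stable {m : M} {i p : ℕ} (hp : m ^ (i + p) = m ^ i) :
    ∀ n, i ≤ n → m ^ (n + p) = m ^ n := by
  intro n hn
  have : m ^ (n + p) = m ^ (n - i) * m ^ (i + p) := by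
    rw [← pow_add]
    congr 1
    omega
  rw [this, hp, ← pow_add]
  congr 1; omega

theorem exists_idem_pow [Finite M] (m : M) : ∃ k, 0 < k ∧ m ^ k * m ^ k = m ^ k := by
  obtain ⟨i, j, hne, hij⟩ := Finite.exists_ne_map_eq_of_infinite (fun n : ℕ => m ^ n)
  wlog hlt : i < j generalizing i j
  · exact this j i hne.symm hij.symm (by omega)
  have hij' : m ^ i = m ^ j := hij
  set p := j - i with hp
  have hpp : m ^ (i + p) = m ^ i := by rw [show i + p = j by omega, hij']
  have hstep := pow_stable hpp
  have hppos : 0 < p := by omega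
  set k := (i + 1) * p with hk
  have hik : i ≤ k := by
    calc i ≤ (i + 1) * 1 := by omega
    _ ≤ (i + 1) * p := Nat.mul_le_mul_left _ hppos
  have hmain : ∀ c, m ^ (k + c * p) = m ^ k := by
    intro c
    induction c with
    | zero => simp
    | succ c ih =>
      have : k + (c + 1) * p = (k + c * p) + p := by ring
      rw [this, hstep _ (le_trans hik (Nat.le_add_right _ _)), ih]
  refine ⟨k, by positivity, ?_⟩
  rw [← pow_add, show k + k = k + (i + 1) * p from rfl, hmain]

theorem idem_pow_of_idem {a : M} (ha : a * a = a) : ∀ k, 0 < k → a ^ k = a := by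
  intro k hk
  induction k with
  | zero => omega
  | succ k ih =>
    rcases Nat.eq_zero_or_pos k with rfl | hk'
    · rw [pow_one]
    · rw [pow_succ, ih hk', ha]

theorem exists_common_idem_pow [Finite M] (m₁ m₂ : M) :
    ∃ k, 0 < k ∧ m₁ ^ k * m₁ ^ k = m₁ ^ k ∧ m₂ ^ k * m₂ ^ k = m₂ ^ k := by
  obtain ⟨k₁, hk₁, hi₁⟩ := exists_idem_pow m₁
  obtain ⟨k₂, hk₂, hi₂⟩ := exists_idem_pow m₂
  refine ⟨k₁ * k₂, by positivity, ?_, ?_⟩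
  · rw [pow_mul, idem_pow_of_idem hi₁ k₂ hk₂, hi₁]
  · rw [mul_comm k₁ k₂, pow_mul, idem_pow_of_idem hi₂ k₁ hk₁, hi₂]

end ArrowAux2


section ArrowRamsey

variable {M : Type} [Finite M]

theorem exists_infinite_fiber {S : Set ℕ} (hS : S.Infinite) (c : ℕ → M) :
    ∃ m, {x | x ∈ S ∧ c x = m}.Infinite := by
  by_contra hc
  push_neg at hc
  exact hS (Set.Finite.subset (Set.finite_iUnion hc) fun x hx => Set.mem_iUnion.2 ⟨c x, hx, rfl⟩)

/-- State of the Ramsey construction: current element, its color, remaining infinite set. -/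
def RamseyGood (c : ℕ → ℕ → M) (p : ℕ × M × Set ℕ) : Prop :=
  p.2.2.Infinite ∧ ∀ x ∈ p.2.2, p.1 < x ∧ c p.1 x = p.2.1

theorem ramsey_start (c : ℕ → ℕ → M) : ∃ p : ℕ × M × Set ℕ, RamseyGood c p := by
  obtain ⟨m, hm⟩ := exists_infinite_fiber (Set.Ioi_infinite 0) (c 0)
  exact ⟨(0, m, {x | x ∈ Set.Ioi 0 ∧ c 0 x = m}), hm, fun x hx => ⟨hx.1, hx.2⟩⟩

theorem ramsey_step (c : ℕ → ℕ → M) (p : ℕ × M × Set ℕ) (hp : RamseyGood c p) :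
    ∃ q : ℕ × M × Set ℕ, RamseyGood c q ∧ q.1 ∈ p.2.2 ∧ q.2.2 ⊆ p.2.2 := by
  obtain ⟨a, ha⟩ := hp.1.nonempty
  have hS' : {x | x ∈ p.2.2 ∧ a < x}.Infinite := by
    apply (hp.1.diff (Set.finite_le_nat a)).mono
    rintro x ⟨h1, h2⟩
    exact ⟨h1, by simpa using h2⟩
  obtain ⟨m, hm⟩ := exists_infinite_fiber hS' (c a)
  refine ⟨(a, m, {x | (x ∈ p.2.2 ∧ a < x) ∧ c a x = m}), ⟨hm, ?_⟩, ha, ?_⟩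
  · rintro x ⟨⟨_, hx2⟩, hx3⟩; exact ⟨hx2, hx3⟩
  · rintro x ⟨⟨hx1, _⟩, _⟩; exact hx1

noncomputable def ramseySeq (c : ℕ → ℕ → M) : ℕ → {p : ℕ × M × Set ℕ // RamseyGood c p}
  | 0 => ⟨(ramsey_start c).choose, (ramsey_start c).choose_spec⟩
  | n + 1 =>
    ⟨(ramsey_step c (ramseySeq c n).1 (ramseySeq c n).2).choose,
      (ramsey_step c (ramseySeq c n).1 (ramseySeq c n).2).choose_spec.1⟩

noncomputable def rA (c : ℕ → ℕ → M) (k : ℕ) : ℕ := (ramseySeq c k).1.1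
noncomputable def rD (c : ℕ → ℕ → M) (k : ℕ) : M := (ramseySeq c k).1.2.1
noncomputable def rS (c : ℕ → ℕ → M) (k : ℕ) : Set ℕ := (ramseySeq c k).1.2.2

theorem rGood (c : ℕ → ℕ → M) (k : ℕ) : ∀ x ∈ rS c k, rA c k < x ∧ c (rA c k) x = rD c k :=
  (ramseySeq c k).2.2

theorem rStep (c : ℕ → ℕ → M) (k : ℕ) : rA c (k + 1) ∈ rS c k ∧ rS c (k + 1) ⊆ rS c k := by
  have hs := (ramsey_step c (ramseySeq c k).1 (ramseySeq c k).2).choose_spec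
  exact ⟨hs.2.1, hs.2.2⟩

theorem rS_mono (c : ℕ → ℕ → M) : ∀ {i j}, i ≤ j → rS c j ⊆ rS c i := by
  intro i j hij
  induction j with
  | zero => have : i = 0 := Nat.le_zero.mp hij; subst this; exact subset_rfl
  | succ j ih =>
    rcases Nat.lt_or_ge i (j + 1) with hm | hm
    · exact ((rStep c j).2).trans (ih (Nat.lt_succ_iff.mp hm))
    · have : i = j + 1 := le_antisymm hij hm
      subst this; exact subset_rfl

theorem rA_mem (c : ℕ → ℕ → M) {i j : ℕ} (hij : i < j) : rA c j ∈ rS c i := by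
  cases j with
  | zero => omega
  | succ j => exact rS_mono c (Nat.lt_succ_iff.mp hij) (rStep c j).1

theorem ramsey_pairs (c : ℕ → ℕ → M) :
    ∃ g : ℕ → ℕ, StrictMono g ∧ ∃ e : M, ∀ i j, i < j → c (g i) (g j) = e := by
  have hA : StrictMono (rA c) :=
    strictMono_nat_of_lt_succ fun k => (rGood c k _ (rA_mem c (Nat.lt_succ_self k))).1
  obtain ⟨e, he⟩ := exists_infinite_fiber Set.infinite_univ (rD c)
  have hp : {k | rD c k = e}.Infinite := he.mono fun x hx => hx.2
  refine ⟨fun n => rA c (Nat.nth (fun k => rD c k = e) n),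
    hA.comp (Nat.nth_strictMono hp), e, fun i j hij => ?_⟩
  have hnth : Nat.nth (fun k => rD c k = e) i < Nat.nth (fun k => rD c k = e) j :=
    Nat.nth_strictMono hp hij
  rw [(rGood c _ _ (rA_mem c hnth)).2]
  exact Nat.nth_mem_of_infinite hp i

end ArrowRamsey


section ArrowSeg

variable {Γ : Type} {M : Type} [Monoid M]

/-- The finite segment `f i ⋯ f (j-1)` of an infinite word. -/
def seg (f : ℕ → Γ) (i j : ℕ) : List Γ := (List.range (j - i)).map fun k => f (i + k)

theorem seg_length (f : ℕ → Γ) (i j : ℕ) : (seg f i j).length = j - i := by simp [seg]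

theorem seg_append (f : ℕ → Γ) {i j k : ℕ} (hij : i ≤ j) (hjk : j ≤ k) :
    seg f i j ++ seg f j k = seg f i k := by
  unfold seg
  rw [show k - i = (j - i) + (k - j) by omega, List.range_add, List.map_append, List.map_map]
  congr 1
  apply List.map_congr_left
  intro m _
  simp only [Function.comp_apply]
  congr 1
  omega

theorem isPre_seg (f : ℕ → Γ) (m : ℕ) : IsPre (seg f 0 m) (Sum.inr f : Word Γ) := by
  intro i
  simp only [List.get_eq_getElem]
  simp [seg, List.get_eq_getElem]

theorem infinite_mem_pairSet [Finite M] {h : List Γ → M} (hh : IsHom h) (f : ℕ → Γ) :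
    ∃ s e, LinkedPair s e ∧ (Sum.inr f : Word Γ) ∈ pairSet h s e := by
  obtain ⟨g, hg, e, hge⟩ := ramsey_pairs (fun i j => h (seg f i j))
  have hseg : ∀ {i j : ℕ}, i < j → h (seg f (g i) (g j)) = e := fun hij => hge _ _ hij
  have hidem : e * e = e := by
    calc e * e = h (seg f (g 0) (g 1)) * h (seg f (g 1) (g 2)) := by
          rw [hseg (by omega : (0:ℕ) < 1), hseg (by omega : (1:ℕ) < 2)]
      _ = h (seg f (g 0) (g 2)) := by
          rw [← hh.map_mul,
            seg_append f (hg (by omega : (0:ℕ) < 1)).le (hg (by omega : (1:ℕ) < 2)).le]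
      _ = e := hseg (by omega : (0:ℕ) < 2)
  set s := h (seg f 0 (g 1)) with hs
  have hs2 : s = h (seg f 0 (g 0)) * e := by
    rw [hs, ← seg_append f (Nat.zero_le _) (hg (by omega : (0:ℕ) < 1)).le, hh.map_mul,
      hseg (by omega : (0:ℕ) < 1)]
  have hlink : LinkedPair s e := by
    refine ⟨?_, hidem⟩
    rw [hs2, mul_assoc, hidem]
  refine ⟨s, e, hlink, seg f 0 (g 1), fun i => seg f (g (i + 1)) (g (i + 2)), rfl,
    fun i => hseg (by omega), ?_⟩
  have hpp : ∀ n, partialProd (seg f 0 (g 1)) (fun i => seg f (g (i + 1)) (g (i + 2))) n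
      = seg f 0 (g (n + 1)) := by
    intro n
    induction n with
    | zero => exact pp_zero _ _
    | succ n ih =>
      rw [pp_succ, ih, seg_append f (Nat.zero_le _) (hg (by omega : n + 1 < n + 2)).le]
  constructor
  · intro n
    rw [hpp]
    exact isPre_seg f (g (n + 1))
  · intro k
    refine ⟨k + 1, ?_⟩
    rw [hpp, seg_length]
    have := hg.le_apply (x := k + 1 + 1)
    omega

end ArrowSeg


section ArrowRec

variable {Γ : Type} {M : Type} [Monoid M] {h : List Γ → M} {L : Set (Word Γ)}

theorem pairSet_subset_of_nonempty (hrec : StronglyRecognizes h L) {s e : M}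
    (hlink : LinkedPair s e) (hne : (pairSet h s e ∩ L).Nonempty) : pairSet h s e ⊆ L := by
  intro α hα
  rw [hrec]
  exact Set.mem_iUnion.2 ⟨s, Set.mem_iUnion.2 ⟨e, Set.mem_iUnion.2 ⟨⟨hlink, hne⟩, hα⟩⟩⟩

theorem mem_L_elim (hrec : StronglyRecognizes h L) {α : Word Γ} (hα : α ∈ L) :
    ∃ s e, LinkedPair s e ∧ pairSet h s e ⊆ L ∧ α ∈ pairSet h s e := by
  rw [hrec] at hα
  simp only [Set.mem_iUnion] at hα
  obtain ⟨s, e, ⟨hl, hne⟩, hmem⟩ := hα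
  exact ⟨s, e, hl, pairSet_subset_of_nonempty hrec hl hne, hmem⟩

theorem inl_mem_L_iff (hh : IsHom h) (hrec : StronglyRecognizes h L) {w : List Γ} :
    (Sum.inl w : Word Γ) ∈ L ↔ pairSet h (h w) 1 ⊆ L := by
  constructor
  · intro hw
    obtain ⟨s, e, hl, hsub, hmem⟩ := mem_L_elim hrec hw
    obtain ⟨hs, he⟩ := (inl_mem_pairSet hh).mp hmem
    subst he
    rw [← hs]
    exact hsub
  · intro hsub
    exact hsub ((inl_mem_pairSet hh).mpr ⟨rfl, rfl⟩)

theorem gamma_mem (hh : IsHom h) {s x y : M} {u x' y' : List Γ}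
    (hu : h u = s) (hx : h x' = x) (hy : h y' = y) (hne : x' ++ y' ≠ [])
    {k : ℕ} (hk : 0 < k) :
    ∃ α : Word Γ, α ∈ pairSet h s ((x * y) ^ k) ∧ α ∈ pairSet h (s * x) ((y * x) ^ k) := by
  have hvne : ∀ _ : ℕ, x' ++ y' ≠ [] := fun _ => hne
  have hinf := isInfProd_wseq hvne u
  set γ : Word Γ := Sum.inr (wseq u (fun _ => x' ++ y') hvne) with hγ
  have hw : h (x' ++ y') = x * y := by rw [hh.map_mul, hx, hy]
  have hw' : h (y' ++ x') = y * x := by rw [hh.map_mul, hy, hx]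
  have hlenw : 0 < (x' ++ y').length := List.length_pos_iff.mpr hne
  refine ⟨γ, ⟨u, fun _ => (List.replicate k (x' ++ y')).flatten, hu,
      fun i => by rw [h_flatten_replicate hh, hw], ?_, ?_⟩,
    ⟨u ++ x', fun _ => (List.replicate k (y' ++ x')).flatten,
      by rw [hh.map_mul, hu, hx],
      fun i => by rw [h_flatten_replicate hh, hw'], ?_, ?_⟩⟩
  · -- prefixes for the first factorization
    intro n
    have hP' : partialProd u (fun _ => (List.replicate k (x' ++ y')).flatten) n
        = partialProd u (fun _ => x' ++ y') (n * k) := by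
      rw [pp_const, pp_const, flatten_replicate_mul]
    rw [hP']
    exact hinf.1 (n * k)
  · -- unboundedness for the first factorization
    intro K
    refine ⟨K + 1, ?_⟩
    have hP' : partialProd u (fun _ => (List.replicate k (x' ++ y')).flatten) (K + 1)
        = partialProd u (fun _ => x' ++ y') ((K + 1) * k) := by
      rw [pp_const, pp_const, flatten_replicate_mul]
    rw [hP']
    have h1 := pp_length_le hvne u ((K + 1) * k)
    have h2 : K + 1 ≤ (K + 1) * k := Nat.le_mul_of_pos_right _ hk
    omega
  · -- prefixes for the second factorization
    intro n
    have key : partialProd (u ++ x') (fun _ => (List.replicate k (y' ++ x')).flatten) n ++ y'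
        = partialProd u (fun _ => x' ++ y') (n * k + 1) := by
      rw [pp_const, pp_const, flatten_replicate_mul, List.replicate_succ', List.flatten_append]
      simp only [List.flatten_cons, List.flatten_nil, List.append_nil]
      rw [List.append_assoc u x', append_flatten_replicate]
      simp [List.append_assoc]
    exact isPre_mono ⟨y', key⟩ (hinf.1 (n * k + 1))
  · -- unboundedness for the second factorization
    intro K
    refine ⟨K + 1, ?_⟩
    have hbne : (List.replicate k (y' ++ x')).flatten ≠ [] := by
      intro hcon
      have := length_flatten_replicate (y' ++ x') k
      rw [hcon] at this
      simp only [List.length_nil, List.length_append] at this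
      simp only [List.length_append] at hlenw
      rcases Nat.mul_eq_zero.mp this.symm with h0 | h0 <;> omega
    have := pp_length_le (fun _ : ℕ => hbne) (u ++ x') (K + 1)
    omega

end ArrowRec


section ArrowMain

variable {Γ : Type} {M : Type} [Monoid M] {h : List Γ → M} {L : Set (Word Γ)}

/-- (2) → (3). -/
theorem three_of_two (hh : IsHom h) (hsurj : Function.Surjective h)
    (hrec : StronglyRecognizes h L)
    (h2 : ∀ s e t f : M, LinkedPair s e → LinkedPair t f → (∃ x, t = s * x) →
      (∃ y, s = t * y) → (pairSet h s e ⊆ L ↔ pairSet h t f ⊆ L)) :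
    ∀ s e : M, LinkedPair s e →
      (pairSet h s e ⊆ L ↔ ∀ u : List Γ, h u = s → Sum.inl u ∈ L) := by
  intro s e hse
  have hs1 : LinkedPair s (1 : M) := ⟨mul_one s, one_mul 1⟩
  have hiff := h2 s e s 1 hse hs1 ⟨1, (mul_one s).symm⟩ ⟨1, (mul_one s).symm⟩
  constructor
  · intro hsub u hu
    exact (hiff.mp hsub) ((inl_mem_pairSet hh).mpr ⟨hu.symm, rfl⟩)
  · intro hall
    obtain ⟨u, hu⟩ := hsurj s
    have := (inl_mem_L_iff hh hrec).mp (hall u hu)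
    rw [hu] at this
    exact hiff.mpr this

/-- (3) → (2). -/
theorem two_of_three [Finite M] (hh : IsHom h) (hsurj : Function.Surjective h)
    (hrec : StronglyRecognizes h L)
    (h3 : ∀ s e : M, LinkedPair s e →
      (pairSet h s e ⊆ L ↔ ∀ u : List Γ, h u = s → Sum.inl u ∈ L)) :
    ∀ s e t f : M, LinkedPair s e → LinkedPair t f → (∃ x, t = s * x) →
      (∃ y, s = t * y) → (pairSet h s e ⊆ L ↔ pairSet h t f ⊆ L) := by
  have key : ∀ s e t f : M, LinkedPair s e → LinkedPair t f → (∃ x, t = s * x) →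
      (∃ y, s = t * y) → pairSet h s e ⊆ L → pairSet h t f ⊆ L := by
    rintro s e t f hse htf ⟨x, hx⟩ ⟨y, hy⟩ hsub
    obtain ⟨u, hu⟩ := hsurj s
    obtain ⟨x', hx'⟩ := hsurj x
    obtain ⟨y', hy'⟩ := hsurj y
    by_cases hne : x' ++ y' = []
    · have hx1 : x = 1 := by
        rw [← hx', (List.append_eq_nil_iff.mp hne).1, hh.map_one]
      have hts : t = s := by rw [hx, hx1, mul_one]
      subst hts
      exact (h3 t f htf).mpr ((h3 t e hse).mp hsub)
    · obtain ⟨k, hk, hi1, hi2⟩ := exists_common_idem_pow (x * y) (y * x)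
      have hsxy : s * (x * y) = s := by rw [← mul_assoc, ← hx, ← hy]
      have htyx : t * (y * x) = t := by rw [← mul_assoc, ← hy, ← hx]
      have hlink1 : LinkedPair s ((x * y) ^ k) := ⟨linked_pow hsxy k, hi1⟩
      have hlink2 : LinkedPair t ((y * x) ^ k) := ⟨linked_pow htyx k, hi2⟩
      obtain ⟨γ, hγ1, hγ2⟩ := gamma_mem hh hu hx' hy' hne hk
      rw [← hx] at hγ2
      have hsg : pairSet h s ((x * y) ^ k) ⊆ L :=
        (h3 s _ hlink1).mpr ((h3 s e hse).mp hsub)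
      have htg : pairSet h t ((y * x) ^ k) ⊆ L :=
        pairSet_subset_of_nonempty hrec hlink2 ⟨γ, hγ2, hsg hγ1⟩
      exact (h3 t f htf).mpr ((h3 t _ hlink2).mp htg)
  intro s e t f hse htf hx hy
  exact ⟨key s e t f hse htf hx hy, key t f s e htf hse hy hx⟩

/-- (1) → (2). -/
theorem two_of_one [Finite M] (hh : IsHom h) (hsurj : Function.Surjective h)
    (hrec : StronglyRecognizes h L)
    (h1 : L = arrow {u : List Γ | ∃ e, LinkedPair (h u) e ∧ pairSet h (h u) e ⊆ L}) :
    ∀ s e t f : M, LinkedPair s e → LinkedPair t f → (∃ x, t = s * x) →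
      (∃ y, s = t * y) → (pairSet h s e ⊆ L ↔ pairSet h t f ⊆ L) := by
  have ext : ∀ s e : M, LinkedPair s e → (∃ e₀, LinkedPair s e₀ ∧ pairSet h s e₀ ⊆ L) →
      pairSet h s e ⊆ L := by
    rintro s e hse ⟨e₀, he₀, hsub⟩ α hα
    obtain ⟨u, v, hu, hv, hprod⟩ := hα
    rw [h1]
    cases α with
    | inl w =>
      have hwe := (inl_mem_pairSet hh).mp ⟨u, v, hu, hv, hprod⟩
      rw [inl_mem_arrow]
      exact ⟨e₀, hwe.1 ▸ he₀, hwe.1 ▸ hsub⟩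
    | inr f =>
      apply inr_mem_arrow_of_cofinal
      intro k
      obtain ⟨n, hn⟩ := hprod.2 k
      have hq : h (partialProd u v n) = s := h_pp_linked hh hv hu hse.1 n
      exact ⟨partialProd u v n, hprod.1 n, hn.le,
        ⟨e₀, by rw [hq]; exact he₀, by rw [hq]; exact hsub⟩⟩
  have key : ∀ s e t f : M, LinkedPair s e → LinkedPair t f → (∃ x, t = s * x) →
      (∃ y, s = t * y) → pairSet h s e ⊆ L → pairSet h t f ⊆ L := by
    rintro s e t f hse htf ⟨x, hx⟩ ⟨y, hy⟩ hsub
    obtain ⟨u, hu⟩ := hsurj s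
    obtain ⟨x', hx'⟩ := hsurj x
    obtain ⟨y', hy'⟩ := hsurj y
    by_cases hne : x' ++ y' = []
    · have hx1 : x = 1 := by
        rw [← hx', (List.append_eq_nil_iff.mp hne).1, hh.map_one]
      have hts : t = s := by rw [hx, hx1, mul_one]
      subst hts
      exact ext t f htf ⟨e, hse, hsub⟩
    · obtain ⟨k, hk, hi1, hi2⟩ := exists_common_idem_pow (x * y) (y * x)
      have hsxy : s * (x * y) = s := by rw [← mul_assoc, ← hx, ← hy]
      have htyx : t * (y * x) = t := by rw [← mul_assoc, ← hy, ← hx]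
      have hlink1 : LinkedPair s ((x * y) ^ k) := ⟨linked_pow hsxy k, hi1⟩
      have hlink2 : LinkedPair t ((y * x) ^ k) := ⟨linked_pow htyx k, hi2⟩
      obtain ⟨γ, hγ1, hγ2⟩ := gamma_mem hh hu hx' hy' hne hk
      rw [← hx] at hγ2
      have hsg : pairSet h s ((x * y) ^ k) ⊆ L := ext s _ hlink1 ⟨e, hse, hsub⟩
      have htg : pairSet h t ((y * x) ^ k) ⊆ L :=
        pairSet_subset_of_nonempty hrec hlink2 ⟨γ, hγ2, hsg hγ1⟩
      exact ext t f htf ⟨(y * x) ^ k, hlink2, htg⟩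
  intro s e t f hse htf hx hy
  exact ⟨key s e t f hse htf hx hy, key t f s e htf hse hy hx⟩

/-- (2) → (1). -/
theorem one_of_two [Finite M] (hh : IsHom h) (hsurj : Function.Surjective h)
    (hrec : StronglyRecognizes h L)
    (h2 : ∀ s e t f : M, LinkedPair s e → LinkedPair t f → (∃ x, t = s * x) →
      (∃ y, s = t * y) → (pairSet h s e ⊆ L ↔ pairSet h t f ⊆ L)) :
    L = arrow {u : List Γ | ∃ e, LinkedPair (h u) e ∧ pairSet h (h u) e ⊆ L} := by
  have h3 := three_of_two hh hsurj hrec h2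
  ext α
  constructor
  · intro hα
    obtain ⟨s, e, hl, hsub, hmem⟩ := mem_L_elim hrec hα
    obtain ⟨u, v, hu, hv, hprod⟩ := hmem
    cases α with
    | inl w =>
      have hwe := (inl_mem_pairSet hh).mp ⟨u, v, hu, hv, hprod⟩
      rw [inl_mem_arrow]
      exact ⟨e, hwe.1 ▸ hl, hwe.1 ▸ hsub⟩
    | inr f =>
      apply inr_mem_arrow_of_cofinal
      intro k
      obtain ⟨n, hn⟩ := hprod.2 k
      have hq : h (partialProd u v n) = s := h_pp_linked hh hv hu hl.1 n
      exact ⟨partialProd u v n, hprod.1 n, hn.le,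
        ⟨e, by rw [hq]; exact hl, by rw [hq]; exact hsub⟩⟩
  · intro hα
    cases α with
    | inl w =>
      obtain ⟨e₀, hl₀, hsub₀⟩ := inl_mem_arrow.mp hα
      exact (h3 _ _ hl₀).mp hsub₀ w rfl
    | inr f =>
      obtain ⟨s, e, hl, hmem⟩ := infinite_mem_pairSet hh f
      obtain ⟨u, v, hu, hv, hprod⟩ := hmem
      have hPre0 : IsPre u (Sum.inr f : Word Γ) := by
        have := hprod.1 0
        rwa [pp_zero] at this
      obtain ⟨z, hz1, hz2⟩ := hα u hPre0
      obtain ⟨e', hl', hsub'⟩ := hz2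
      obtain ⟨m, hm⟩ := hprod.2 (u ++ z).length
      obtain ⟨r, hr⟩ := isPre_prefix_of_le hz1 (hprod.1 m) hm.le
      have hPm : h (partialProd u v m) = s := h_pp_linked hh hv hu hl.1 m
      have hsr : s = h (u ++ z) * h r := by rw [← hh.map_mul, hr, hPm]
      have hqs : h (u ++ z) = s * h z := by rw [hh.map_mul, hu]
      exact (h2 _ e' s e hl' hl ⟨h r, hsr⟩ ⟨h z, hqs⟩).mp hsub' ⟨u, v, hu, hv, hprod⟩

/-- (2) → (4). -/
theorem four_of_two [Finite M] (hh : IsHom h) (hsurj : Function.Surjective h)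
    (hrec : StronglyRecognizes h L)
    (h2 : ∀ s e t f : M, LinkedPair s e → LinkedPair t f → (∃ x, t = s * x) →
      (∃ y, s = t * y) → (pairSet h s e ⊆ L ↔ pairSet h t f ⊆ L)) :
    L = arrow {u : List Γ | Sum.inl u ∈ L} ∧
      Lᶜ = arrow {u : List Γ | Sum.inl u ∉ L} := by
  have h3 := three_of_two hh hsurj hrec h2
  constructor
  · ext α
    constructor
    · intro hα
      cases α with
      | inl w => exact inl_mem_arrow.mpr hα
      | inr f =>
        obtain ⟨s, e, hl, hsub, hmem⟩ := mem_L_elim hrec hα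
        obtain ⟨u, v, hu, hv, hprod⟩ := hmem
        apply inr_mem_arrow_of_cofinal
        intro k
        obtain ⟨n, hn⟩ := hprod.2 k
        exact ⟨partialProd u v n, hprod.1 n, hn.le,
          (h3 s e hl).mp hsub _ (h_pp_linked hh hv hu hl.1 n)⟩
    · intro hα
      cases α with
      | inl w => exact inl_mem_arrow.mp hα
      | inr f =>
        obtain ⟨s, e, hl, hmem⟩ := infinite_mem_pairSet hh f
        obtain ⟨u, v, hu, hv, hprod⟩ := hmem
        have hPre0 : IsPre u (Sum.inr f : Word Γ) := by
          have := hprod.1 0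
          rwa [pp_zero] at this
        obtain ⟨z, hz1, hz2⟩ := hα u hPre0
        obtain ⟨m, hm⟩ := hprod.2 (u ++ z).length
        obtain ⟨r, hr⟩ := isPre_prefix_of_le hz1 (hprod.1 m) hm.le
        have hPm : h (partialProd u v m) = s := h_pp_linked hh hv hu hl.1 m
        have hsr : s = h (u ++ z) * h r := by rw [← hh.map_mul, hr, hPm]
        have hqs : h (u ++ z) = s * h z := by rw [hh.map_mul, hu]
        have h1q : LinkedPair (h (u ++ z)) (1 : M) := ⟨mul_one _, one_mul 1⟩
        have hsubq := (inl_mem_L_iff hh hrec).mp hz2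
        exact (h2 _ 1 s e h1q hl ⟨h r, hsr⟩ ⟨h z, hqs⟩).mp hsubq ⟨u, v, hu, hv, hprod⟩
  · ext α
    simp only [Set.mem_compl_iff]
    constructor
    · intro hα
      cases α with
      | inl w => exact inl_mem_arrow.mpr hα
      | inr f =>
        obtain ⟨s, e, hl, hmem⟩ := infinite_mem_pairSet hh f
        obtain ⟨u, v, hu, hv, hprod⟩ := hmem
        have hnall : ¬ ∀ w : List Γ, h w = s → Sum.inl w ∈ L := by
          intro hall
          exact hα ((h3 s e hl).mpr hall ⟨u, v, hu, hv, hprod⟩)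
        push_neg at hnall
        obtain ⟨u₀, hu₀, hu₀n⟩ := hnall
        have hsnot : ∀ w : List Γ, h w = s → Sum.inl w ∉ L := by
          intro w hw hmemw
          exact hu₀n ((inl_mem_L_iff hh hrec).mp hmemw
            ((inl_mem_pairSet hh).mpr ⟨by rw [hw, hu₀], rfl⟩))
        apply inr_mem_arrow_of_cofinal
        intro k
        obtain ⟨n, hn⟩ := hprod.2 k
        exact ⟨partialProd u v n, hprod.1 n, hn.le,
          hsnot _ (h_pp_linked hh hv hu hl.1 n)⟩
    · intro hα hmemL
      obtain ⟨s, e, hl, hsub, hmem⟩ := mem_L_elim hrec hmemL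
      obtain ⟨u, v, hu, hv, hprod⟩ := hmem
      cases α with
      | inl w => exact inl_mem_arrow.mp hα hmemL
      | inr f =>
        have hPre0 : IsPre u (Sum.inr f : Word Γ) := by
          have := hprod.1 0
          rwa [pp_zero] at this
        obtain ⟨z, hz1, hz2⟩ := hα u hPre0
        obtain ⟨m, hm⟩ := hprod.2 (u ++ z).length
        obtain ⟨r, hr⟩ := isPre_prefix_of_le hz1 (hprod.1 m) hm.le
        have hPm : h (partialProd u v m) = s := h_pp_linked hh hv hu hl.1 m
        have hsr : s = h (u ++ z) * h r := by rw [← hh.map_mul, hr, hPm]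
        have hqs : h (u ++ z) = s * h z := by rw [hh.map_mul, hu]
        have h1q : LinkedPair (h (u ++ z)) (1 : M) := ⟨mul_one _, one_mul 1⟩
        have hs1 : LinkedPair s (1 : M) := ⟨mul_one s, one_mul 1⟩
        have hsub1 : pairSet h s 1 ⊆ L :=
          (h3 s 1 hs1).mpr ((h3 s e hl).mp hsub)
        have hsubq : pairSet h (h (u ++ z)) 1 ⊆ L :=
          (h2 _ 1 s 1 h1q hs1 ⟨h r, hsr⟩ ⟨h z, hqs⟩).mpr hsub1
        exact hz2 (hsubq ((inl_mem_pairSet hh).mpr ⟨rfl, rfl⟩))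

/-- Transfer of membership of finite words along `R`-equivalence, given (4). -/
theorem finite_transfer (hh : IsHom h) (hsurj : Function.Surjective h)
    (hrec : StronglyRecognizes h L)
    (h4 : L = arrow {u : List Γ | Sum.inl u ∈ L} ∧
      Lᶜ = arrow {u : List Γ | Sum.inl u ∉ L})
    {s₁ s a b : M} (ha : s₁ = s * a) (hb : s = s₁ * b)
    (hall1 : ∀ u : List Γ, h u = s₁ → Sum.inl u ∈ L) :
    ∀ u : List Γ, h u = s → Sum.inl u ∈ L := by
  intro u hu
  by_contra hnot
  obtain ⟨a', ha'⟩ := hsurj a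
  obtain ⟨b', hb'⟩ := hsurj b
  by_cases hne : a' ++ b' = []
  · have ha1 : a = 1 := by rw [← ha', (List.append_eq_nil_iff.mp hne).1, hh.map_one]
    exact hnot (hall1 u (by rw [hu, ha, ha1, mul_one]))
  · have hvne : ∀ _ : ℕ, a' ++ b' ≠ [] := fun _ => hne
    have hinf := isInfProd_wseq hvne u
    set δ : Word Γ := Sum.inr (wseq u (fun _ => a' ++ b') hvne) with hδ
    have hsab : s * (a * b) = s := by rw [← mul_assoc, ← ha, ← hb]
    have hPn : ∀ n, h (partialProd u (fun _ => a' ++ b') n) = s :=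
      h_pp_linked hh (fun i => by rw [hh.map_mul, ha', hb']) hu hsab
    have hsnot : ∀ w : List Γ, h w = s → Sum.inl w ∉ L := by
      intro w hw hmemw
      exact hnot ((inl_mem_L_iff hh hrec).mp hmemw
        ((inl_mem_pairSet hh).mpr ⟨by rw [hw, hu], rfl⟩))
    have hδL : δ ∈ L := by
      rw [h4.1]
      apply inr_mem_arrow_of_cofinal
      intro k
      refine ⟨partialProd u (fun _ => a' ++ b') k ++ a', ?_, ?_, ?_⟩
      · refine isPre_mono ⟨b', ?_⟩ (hinf.1 (k + 1))
        rw [pp_succ, List.append_assoc]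
      · have := pp_length_le hvne u k
        rw [List.length_append]
        omega
      · exact hall1 _ (by rw [hh.map_mul, hPn, ha', ← ha])
    have hδC : δ ∉ L := by
      have : δ ∈ Lᶜ := by
        rw [h4.2]
        apply inr_mem_arrow_of_cofinal
        intro k
        exact ⟨partialProd u (fun _ => a' ++ b') k, hinf.1 k, pp_length_le hvne u k,
          hsnot _ (hPn k)⟩
      exact this
    exact hδC hδL

/-- (4) → (3). -/
theorem three_of_four (hh : IsHom h) (hsurj : Function.Surjective h)
    (hrec : StronglyRecognizes h L)
    (h4 : L = arrow {u : List Γ | Sum.inl u ∈ L} ∧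
      Lᶜ = arrow {u : List Γ | Sum.inl u ∉ L}) :
    ∀ s e : M, LinkedPair s e →
      (pairSet h s e ⊆ L ↔ ∀ u : List Γ, h u = s → Sum.inl u ∈ L) := by
  intro s e hse
  constructor
  · intro hsub u hu
    obtain ⟨v, hv⟩ := hsurj e
    by_cases hveq : v = []
    · have he1 : e = 1 := by rw [← hv, hveq, hh.map_one]
      exact hsub ((inl_mem_pairSet hh).mpr ⟨hu.symm, he1⟩)
    · have hvne : ∀ _ : ℕ, v ≠ [] := fun _ => hveq
      have hinf := isInfProd_wseq hvne u
      set δ : Word Γ := Sum.inr (wseq u (fun _ => v) hvne) with hδ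
      have hδL : δ ∈ L := hsub ⟨u, fun _ => v, hu, fun _ => hv, hinf⟩
      rw [h4.1] at hδL
      have hPre0 : IsPre u δ := by
        have := hinf.1 0
        rwa [pp_zero] at this
      obtain ⟨z, hz1, hz2⟩ := hδL u hPre0
      obtain ⟨m, hm⟩ := hinf.2 (u ++ z).length
      obtain ⟨r, hr⟩ := isPre_prefix_of_le hz1 (hinf.1 m) hm.le
      have hPm : h (partialProd u (fun _ => v) m) = s :=
        h_pp_linked hh (fun _ => hv) hu hse.1 m
      have hall1 : ∀ w : List Γ, h w = h (u ++ z) → Sum.inl w ∈ L := by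
        intro w hw
        exact (inl_mem_L_iff hh hrec).mp hz2 ((inl_mem_pairSet hh).mpr ⟨hw.symm, rfl⟩)
      exact finite_transfer hh hsurj hrec h4
        (show h (u ++ z) = s * h z by rw [hh.map_mul, hu])
        (show s = h (u ++ z) * h r by rw [← hh.map_mul, hr, hPm]) hall1 u hu
  · intro hall α hα
    obtain ⟨u', v', hu', hv', hprod⟩ := hα
    cases α with
    | inl w => exact hall w ((inl_mem_pairSet hh).mp ⟨u', v', hu', hv', hprod⟩).1.symm
    | inr f =>
      rw [h4.1]
      apply inr_mem_arrow_of_cofinal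
      intro k
      obtain ⟨n, hn⟩ := hprod.2 k
      exact ⟨partialProd u' v' n, hprod.1 n, hn.le,
        hall _ (h_pp_linked hh hv' hu' hse.1 n)⟩

end ArrowMain

end InfWords
theorem arrow_characterizations_tfae (Γ : Type) [Fintype Γ] (M : Type)
    [Monoid M] [Finite M] (h : List Γ → M) (hhom : InfWords.IsHom h)
    (hsurj : Function.Surjective h) (L : Set (InfWords.Word Γ))
    (hrec : InfWords.StronglyRecognizes h L) :
    List.TFAE
      [L = InfWords.arrow {u : List Γ | ∃ e, InfWords.LinkedPair (h u) e ∧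
          InfWords.pairSet h (h u) e ⊆ L},
        ∀ s e t f : M, InfWords.LinkedPair s e → InfWords.LinkedPair t f →
          (∃ x, t = s * x) → (∃ y, s = t * y) →
          (InfWords.pairSet h s e ⊆ L ↔ InfWords.pairSet h t f ⊆ L),
        ∀ s e : M, InfWords.LinkedPair s e →
          (InfWords.pairSet h s e ⊆ L ↔ ∀ u : List Γ, h u = s → Sum.inl u ∈ L),
        L = InfWords.arrow {u : List Γ | Sum.inl u ∈ L} ∧
          Lᶜ = InfWords.arrow {u : List Γ | Sum.inl u ∉ L}] := by
  tfae_have 2 → 3 := InfWords.three_of_two hhom hsurj hrec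
  tfae_have 3 → 2 := InfWords.two_of_three hhom hsurj hrec
  tfae_have 1 → 2 := InfWords.two_of_one hhom hsurj hrec
  tfae_have 2 → 1 := InfWords.one_of_two hhom hsurj hrec
  tfae_have 2 → 4 := InfWords.four_of_two hhom hsurj hrec
  tfae_have 4 → 3 := InfWords.three_of_four hhom hsurj hrec
  tfae_finish
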